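/- arXiv:2212.12372 — 7 statements merged into one kernel-verified Lean document; each statement's English description precedes it below -/
import Mathlib

section
/- Minkowski's first theorem for the shortest lattice vector: for every positive integer n and every invertible matrix B ∈ ℝ^{n×n}, the lattice Λ = {B x : x ∈ ℤ^n} contains a nonzero vector v with ‖v‖² ≤ n · |det B|^{2/n}, where ‖·‖ is the Euclidean norm on ℝ^n. -/
/-!
The columns of `B` form a basis whose `ℤ`-span has covolume `|det B|`. The sup-norm ball of
radius `r = |det B| ^ (1 / n)` is the cube `[-r, r]ⁿ` of volume `2ⁿ |det B|`, so Minkowski's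
convex body theorem gives a nonzero lattice vector in it, whose squared Euclidean norm is at
most `n r²`.
-/

open MeasureTheory Module Submodule

namespace Matrix

variable {ι K : Type*} [Fintype ι] [DecidableEq ι] [Field K]

noncomputable def colBasis (B : Matrix ι ι K) (hB : IsUnit B.det) : Basis ι K (ι → K) :=
  (Pi.basisFun K ι).map (B.toLinearEquiv' (B.invertibleOfIsUnitDet hB))

@[simp]
theorem coe_colBasis (B : Matrix ι ι K) (hB : IsUnit B.det) : ⇑(B.colBasis hB) = B.col := by
  ext i j
  rw [colBasis, Basis.map_apply, Pi.basisFun_apply]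
  change (B *ᵥ Pi.single i 1) j = B.col i j
  simp [mulVec_single, col_apply]

theorem mem_span_colBasis_iff (B : Matrix ι ι K) (hB : IsUnit B.det) {v : ι → K} :
    v ∈ span ℤ (Set.range (B.colBasis hB)) ↔ ∃ x : ι → ℤ, v = B *ᵥ fun i => (x i : K) := by
  rw [coe_colBasis, mem_span_range_iff_exists_fun]
  refine exists_congr fun x => ?_
  rw [eq_comm, mulVec_eq_sum]
  simp [col_def, Int.cast_smul_eq_zsmul]

@[simp]
theorem det_of_colBasis (B : Matrix ι ι K) (hB : IsUnit B.det) :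
    (Matrix.of (B.colBasis hB)).det = B.det := by
  rw [coe_colBasis, ← det_transpose]
  rfl

end Matrix

theorem sum_sq_le_card_mul_norm_sq {ι : Type*} [Fintype ι] (v : ι → ℝ) :
    ∑ i, v i ^ 2 ≤ Fintype.card ι * ‖v‖ ^ 2 := by
  calc ∑ i, v i ^ 2 ≤ ∑ _i : ι, ‖v‖ ^ 2 := Finset.sum_le_sum fun i _ => by
        rw [← sq_abs, ← Real.norm_eq_abs]
        gcongr
        exact norm_le_pi_norm v i
    _ = Fintype.card ι * ‖v‖ ^ 2 := by simp

theorem ZSpan.exists_ne_zero_mem_norm_le_det_rpow {ι : Type*} [Fintype ι] [DecidableEq ι]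
    [Nonempty ι] (b : Basis ι ℝ (ι → ℝ)) :
    ∃ v ∈ span ℤ (Set.range b), v ≠ 0 ∧
      ‖v‖ ≤ |(Matrix.of b).det| ^ ((1 : ℝ) / Fintype.card ι) := by
  set r := |(Matrix.of b).det| ^ ((1 : ℝ) / Fintype.card ι)
  have hr : 0 ≤ r := by positivity
  have hvol : volume (ZSpan.fundamentalDomain b) * 2 ^ finrank ℝ (ι → ℝ) ≤
      volume (Metric.closedBall (0 : ι → ℝ) r) := by
    rw [ZSpan.volume_fundamentalDomain, Real.volume_pi_closedBall 0 hr, finrank_fintype_fun_eq_card,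
      mul_pow, ← Real.rpow_natCast r, ← Real.rpow_mul (abs_nonneg _),
      one_div_mul_cancel (by positivity), Real.rpow_one, ENNReal.ofReal_mul' (by positivity),
      mul_comm, ENNReal.ofReal_pow zero_le_two, ENNReal.ofReal_ofNat]
  have : Countable (span ℤ (Set.range b)).toAddSubgroup :=
    inferInstanceAs (Countable (span ℤ (Set.range b)))
  obtain ⟨⟨v, hv⟩, hv0, hvr⟩ := exists_ne_zero_mem_lattice_of_measure_mul_two_pow_le_measure
    (ZSpan.isAddFundamentalDomain' b volume) (fun x hx => by simpa using hx)
    (convex_closedBall 0 r) (isCompact_closedBall 0 r) hvol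
  exact ⟨v, hv, by simpa using hv0, by simpa using hvr⟩

/-- Minkowski's first theorem for the shortest lattice vector: for every positive
integer `n` and every invertible `B : Matrix (Fin n) (Fin n) ℝ`, the lattice
`{B x : x ∈ ℤ^n}` contains a nonzero vector `v` with `‖v‖² ≤ n · |det B|^(2/n)`. -/
theorem minkowski_first_theorem
    (n : ℕ) (hn : 0 < n) (B : Matrix (Fin n) (Fin n) ℝ) (hB : IsUnit B.det) :
    ∃ v : Fin n → ℝ, v ≠ 0 ∧
      (∃ x : Fin n → ℤ, v = B.mulVec fun i => (x i : ℝ)) ∧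
      ∑ i, v i ^ 2 ≤ (n : ℝ) * |B.det| ^ ((2 : ℝ) / n) := by
  have : NeZero n := ⟨hn.ne'⟩
  obtain ⟨v, hv, hv0, hvle⟩ := ZSpan.exists_ne_zero_mem_norm_le_det_rpow (B.colBasis hB)
  refine ⟨v, hv0, (B.mem_span_colBasis_iff hB).1 hv, ?_⟩
  rw [Matrix.det_of_colBasis, Fintype.card_fin] at hvle
  calc ∑ i, v i ^ 2 ≤ n * ‖v‖ ^ 2 := by simpa using sum_sq_le_card_mul_norm_sq v
    _ ≤ n * (|B.det| ^ ((1 : ℝ) / n)) ^ 2 := by gcongr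
    _ = n * |B.det| ^ ((2 : ℝ) / n) := by
      rw [← Real.rpow_natCast, ← Real.rpow_mul (abs_nonneg _)]
      ring_nf
end

section
/- Existence of a short vector in the factoring lattice of linear dimension (Proposition 1): fix a real constant c > 0. There exists a constant C > 0, depending only on c, such that for every integer N ≥ 4 the following holds. Let n = ⌈log₂ N⌉, let p₁ < p₂ < ⋯ < pₙ be the first n primes, let f : {1,…,n} → {1,2} be any function taking the value 2 exactly ⌈(n+1)/3⌉ times, and let Λ ⊆ ℝ^{n+1} be the ℤ-span of the n+1 vectors b_i = f(i)·e_i + N^c (ln p_i) · e_{n+1} for 1 ≤ i ≤ n, and b_{n+1} = N^c (ln N) · e_{n+1}, where e₁,…,e_{n+1} is the standard basis of ℝ^{n+1}. Then there exists a nonzero vector v ∈ Λ with ‖v‖² ≤ C · log₂ N. -/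
/-- The basis vectors of the (extended) factoring lattice in `ℝ^(n+1)`:
for `i < n`, the vector `b_i = f(i)·e_i + N^c (ln p_i)·e_{n+1}` where `p_i` is the
`i`-th prime (so `p₁ = 2` corresponds to index `0`); the last vector (index `n`)
is `b_{n+1} = N^c (ln N)·e_{n+1}`. -/
noncomputable def factoringBasis (N n : ℕ) (c : ℝ) (f : ℕ → ℕ) :
    Fin (n + 1) → Fin (n + 1) → ℝ := fun i j =>
  (if (j : ℕ) = (i : ℕ) ∧ (i : ℕ) < n then (f i : ℝ) else 0) +
  (if (j : ℕ) = n then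
      (N : ℝ) ^ c *
        (if (i : ℕ) < n then Real.log (Nat.nth Nat.Prime i) else Real.log N)
    else 0)

private lemma two_mul_le_two_pow : ∀ {n : ℕ}, 2 ≤ n → 2 * n ≤ 2 ^ n := by
  intro n hn
  induction n with
  | zero => omega
  | succ m ih =>
    rcases Nat.lt_or_ge m 2 with h | h
    · interval_cases m <;> norm_num
    · have h1 := ih h
      have h2 : 2 ≤ 2 ^ m := by
        calc 2 = 2 ^ 1 := rfl
        _ ≤ 2 ^ m := Nat.pow_le_pow_right (by norm_num) (by omega)
      have h3 : 2 ^ (m + 1) = 2 * 2 ^ m := by ring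
      omega

set_option maxHeartbeats 2000000 in
/-- Existence of a short vector in the factoring lattice of linear dimension
(Proposition 1): for every `c > 0` there is a constant `C > 0` such that for all
integers `N ≥ 4`, with `n = ⌈log₂ N⌉`, any choice of diagonal function
`f : {1,…,n} → {1,2}` taking the value `2` exactly `⌈(n+1)/3⌉` times, the
ℤ-span of the `n+1` factoring-lattice basis vectors contains a nonzero vector `v`
with `‖v‖² ≤ C · log₂ N`. -/
theorem short_vector_linear_dimension (c : ℝ) (hc : 0 < c) :
    ∃ C : ℝ, 0 < C ∧
      ∀ N : ℕ, 4 ≤ N →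
        ∀ n : ℕ, n = ⌈Real.logb 2 (N : ℝ)⌉₊ →
          ∀ f : ℕ → ℕ,
            (∀ i < n, f i = 1 ∨ f i = 2) →
            ((Finset.range n).filter fun i => f i = 2).card = ⌈((n : ℝ) + 1) / 3⌉₊ →
            ∃ v : Fin (n + 1) → ℝ, v ≠ 0 ∧
              (∃ x : Fin (n + 1) → ℤ,
                v = ∑ i, (x i : ℝ) • factoringBasis N n c f i) ∧
              ∑ j, v j ^ 2 ≤ C * Real.logb 2 (N : ℝ) := by
  classical
  set K : ℕ := 2 ^ (⌈c⌉₊ + 1) with hKdef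
  refine ⟨8 * (K : ℝ) ^ 2 + 2, by positivity, ?_⟩
  intro N hN n hn f hf1 _hf2
  have hK2 : 2 ≤ K := by
    calc 2 = 2 ^ 1 := rfl
    _ ≤ 2 ^ (⌈c⌉₊ + 1) := Nat.pow_le_pow_right (by norm_num) (by omega)
  have hN4 : (4:ℝ) ≤ N := by exact_mod_cast hN
  have hN0 : (0:ℝ) < N := by linarith
  have h24 : (2:ℝ) ^ (2:ℝ) = 4 := by
    rw [show (2:ℝ) = ((2:ℕ):ℝ) by norm_num]
    rw [Real.rpow_natCast]
    norm_num
  have hlog2 : (2:ℝ) ≤ Real.logb 2 N := by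
    rw [Real.le_logb_iff_rpow_le (by norm_num) hN0, h24]; exact hN4
  have hlogpos : 0 < Real.logb 2 N := by linarith
  have hn_ge : 2 ≤ n := by
    rw [hn]
    calc 2 = ⌈(2:ℝ)⌉₊ := by simp
    _ ≤ ⌈Real.logb 2 N⌉₊ := Nat.ceil_le_ceil hlog2
  have hlogb_le : Real.logb 2 N ≤ n := by rw [hn]; exact Nat.le_ceil _
  have hn_le : (n:ℝ) ≤ 2 * Real.logb 2 N := by
    have h1 : (n:ℝ) < Real.logb 2 N + 1 := by
      rw [hn]; exact Nat.ceil_lt_add_one (by linarith)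
    linarith
  have hNle : (N:ℝ) ≤ 2 ^ n := by
    have h := (Real.logb_le_iff_le_rpow (by norm_num) hN0).mp hlogb_le
    calc (N:ℝ) ≤ (2:ℝ) ^ ((n:ℕ):ℝ) := h
    _ = 2 ^ n := Real.rpow_natCast 2 n
  have hlnN : 0 < Real.log N := Real.log_pos (by linarith)
  have hlnN_le : Real.log N ≤ n := by
    calc Real.log N ≤ Real.log (2 ^ n) := Real.log_le_log hN0 hNle
    _ = n * Real.log 2 := by rw [Real.log_pow]
    _ ≤ n * 1 := by
      have := Real.log_two_lt_d9
      have hn0 : (0:ℝ) ≤ n := by positivity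
      nlinarith
    _ = n := by ring
  have hNc : (N:ℝ) ^ c ≤ (2:ℝ) ^ (⌈c⌉₊ * n) := by
    calc (N:ℝ) ^ c ≤ ((2:ℝ) ^ n) ^ c := Real.rpow_le_rpow hN0.le hNle hc.le
    _ = (2:ℝ) ^ ((n:ℝ) * c) := by
        rw [← Real.rpow_natCast 2 n, ← Real.rpow_mul (by norm_num)]
    _ ≤ (2:ℝ) ^ ((⌈c⌉₊ * n : ℕ) : ℝ) := by
        apply Real.rpow_le_rpow_of_exponent_le one_le_two
        have h1 : c ≤ (⌈c⌉₊ : ℝ) := Nat.le_ceil c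
        have h2 : (0:ℝ) ≤ n := by positivity
        push_cast
        nlinarith
    _ = (2:ℝ) ^ (⌈c⌉₊ * n) := Real.rpow_natCast _ _
  set M : ℕ := K ^ n - 1 with hMdef
  have hKn2 : 2 ≤ K ^ n := by
    calc 2 = 2 ^ 1 := rfl
    _ ≤ 2 ^ n := Nat.pow_le_pow_right (by norm_num) (by omega)
    _ ≤ K ^ n := Nat.pow_le_pow_left hK2 n
  have hM0 : 0 < M := by omega
  have hMpos : (0:ℝ) < M := by exact_mod_cast hM0
  have hMcast : (M:ℝ) = (K:ℝ) ^ n - 1 := by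
    rw [hMdef]
    push_cast [Nat.cast_sub (by omega : 1 ≤ K ^ n)]
    ring
  have hMge : ((K:ℝ) ^ n) / 2 ≤ M := by
    have h2 : (2:ℝ) ≤ (K:ℝ) ^ n := by exact_mod_cast hKn2
    rw [hMcast]; linarith
  have hKey : (N:ℝ) ^ c * Real.log N ≤ M := by
    have h2n : (n:ℝ) ≤ (2:ℝ) ^ n / 2 := by
      have h0 := two_mul_le_two_pow hn_ge
      have : (2:ℝ) * n ≤ 2 ^ n := by exact_mod_cast h0
      linarith
    have hKpow : ((K:ℝ)) ^ n = (2:ℝ) ^ (⌈c⌉₊ * n) * 2 ^ n := by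
      rw [hKdef]
      push_cast
      rw [← pow_mul, ← pow_add]
      ring_nf
    calc (N:ℝ) ^ c * Real.log N ≤ (2:ℝ) ^ (⌈c⌉₊ * n) * n := by
          apply mul_le_mul hNc hlnN_le hlnN.le (by positivity)
    _ ≤ (2:ℝ) ^ (⌈c⌉₊ * n) * ((2:ℝ) ^ n / 2) := by
          apply mul_le_mul_of_nonneg_left h2n (by positivity)
    _ = (K:ℝ) ^ n / 2 := by rw [hKpow]; ring
    _ ≤ M := hMge
  -- pigeonhole setup
  set P : ℕ → ℝ := fun i => Real.log (Nat.nth Nat.Prime i) with hP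
  set t : (Fin n → Fin K) → ℝ := fun a => ∑ i, (a i : ℝ) * P i with ht
  set s : (Fin n → Fin K) → ℝ := fun a => t a / Real.log N with hs
  have hgbound : ∀ a : Fin n → Fin K, ⌊Int.fract (s a) * M⌋₊ < M := by
    intro a
    rw [Nat.floor_lt (mul_nonneg (Int.fract_nonneg _) hMpos.le)]
    calc Int.fract (s a) * M < 1 * M :=
          mul_lt_mul_of_pos_right (Int.fract_lt_one _) hMpos
    _ = M := one_mul _
  set g : (Fin n → Fin K) → Fin M := fun a => ⟨⌊Int.fract (s a) * M⌋₊, hgbound a⟩ with hg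
  have hcard : Fintype.card (Fin M) < Fintype.card (Fin n → Fin K) := by
    simp only [Fintype.card_fin, Fintype.card_fun]
    omega
  obtain ⟨a, b, hab, hgab⟩ := Fintype.exists_ne_map_eq_of_card_lt g hcard
  set d : ℝ := Int.fract (s a) - Int.fract (s b) with hd
  have hfloor_eq : ⌊Int.fract (s a) * M⌋₊ = ⌊Int.fract (s b) * M⌋₊ := congrArg Fin.val hgab
  have hdM : |d| * M < 1 := by
    have h1 : (⌊Int.fract (s a) * M⌋₊ : ℝ) ≤ Int.fract (s a) * M :=
      Nat.floor_le (mul_nonneg (Int.fract_nonneg _) hMpos.le)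
    have h2 : Int.fract (s a) * M < ⌊Int.fract (s a) * M⌋₊ + 1 := Nat.lt_floor_add_one _
    have h3 : (⌊Int.fract (s b) * M⌋₊ : ℝ) ≤ Int.fract (s b) * M :=
      Nat.floor_le (mul_nonneg (Int.fract_nonneg _) hMpos.le)
    have h4 : Int.fract (s b) * M < ⌊Int.fract (s b) * M⌋₊ + 1 := Nat.lt_floor_add_one _
    rw [hfloor_eq] at h1 h2
    have h5 : |d * M| < 1 := by
      have he : d * M = Int.fract (s a) * M - Int.fract (s b) * M := by rw [hd]; ring
      rw [he, abs_sub_lt_iff]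
      constructor <;> linarith
    rwa [abs_mul, abs_of_pos hMpos] at h5
  -- coefficients
  set x : Fin (n+1) → ℤ := fun j =>
    if h : (j:ℕ) < n then ((a ⟨j, h⟩ : ℤ) - (b ⟨j, h⟩ : ℤ)) else (⌊s b⌋ - ⌊s a⌋) with hx
  set V : Fin (n+1) → ℝ := ∑ i, (x i : ℝ) • factoringBasis N n c f i with hV
  have hVapp : ∀ j : Fin (n+1), V j = ∑ i, (x i : ℝ) * factoringBasis N n c f i j := by
    intro j
    rw [hV, Finset.sum_apply]
    simp [Pi.smul_apply]
  have hxlt : ∀ jj : Fin n, x (Fin.castSucc jj) = (a jj : ℤ) - (b jj : ℤ) := by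
    intro jj
    have h1 : ((Fin.castSucc jj : Fin (n+1)):ℕ) < n := jj.isLt
    simp only [hx]
    rw [dif_pos h1]
    have he : (⟨((Fin.castSucc jj : Fin (n+1)):ℕ), h1⟩ : Fin n) = jj := Fin.ext rfl
    rw [he]
  have hxlast : x (Fin.last n) = ⌊s b⌋ - ⌊s a⌋ := by
    have h1 : ¬ ((Fin.last n : Fin (n+1)):ℕ) < n := by simp
    simp only [hx]
    rw [dif_neg h1]
  have hcomp1 : ∀ jj : Fin n, V (Fin.castSucc jj) =
      ((a jj : ℝ) - (b jj : ℝ)) * (f (jj:ℕ) : ℝ) := by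
    intro jj
    rw [hVapp]
    have h0 : ((Fin.castSucc jj : Fin (n+1)):ℕ) = (jj:ℕ) := rfl
    have h1 : ((Fin.castSucc jj : Fin (n+1)):ℕ) < n := jj.isLt
    have h2 : ((Fin.castSucc jj : Fin (n+1)):ℕ) ≠ n := by omega
    have h1' : (jj:ℕ) < n := jj.isLt
    have h2' : ¬((jj:ℕ) = n) := by omega
    rw [Finset.sum_eq_single (Fin.castSucc jj)]
    · have hcell : factoringBasis N n c f (Fin.castSucc jj) (Fin.castSucc jj) =
          (f ((jj : Fin n):ℕ) : ℝ) := by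
        simp [factoringBasis, h1', h2']
      rw [hcell, hxlt jj]
      push_cast
      ring
    · intro i _ hne
      have h3 : ¬(((jj : Fin n):ℕ) = (i:ℕ) ∧ (i:ℕ) < n) := by
        rintro ⟨h4, -⟩
        exact hne (Fin.ext h4.symm)
      have hcell : factoringBasis N n c f i (Fin.castSucc jj) = 0 := by
        simp [factoringBasis, h3, h2']
      rw [hcell, mul_zero]
    · intro h
      exact absurd (Finset.mem_univ _) h
  have hcomp2 : V (Fin.last n) = (N:ℝ) ^ c * (d * Real.log N) := by
    rw [hVapp]
    have hln : ((Fin.last n : Fin (n+1)) : ℕ) = n := rfl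
    have hstep : ∀ i : Fin (n+1), (x i : ℝ) * factoringBasis N n c f i (Fin.last n) =
        (x i : ℝ) * ((N:ℝ) ^ c * (if (i:ℕ) < n then P (i:ℕ) else Real.log N)) := by
      intro i
      have h3 : ¬ ((n:ℕ) = (i:ℕ) ∧ (i:ℕ) < n) := by
        rintro ⟨h4, h5⟩
        omega
      simp [factoringBasis, h3, hP]
    rw [Finset.sum_congr rfl (fun i _ => hstep i)]
    rw [Fin.sum_univ_castSucc]
    have hlast : ¬ ((Fin.last n : Fin (n+1)) : ℕ) < n := by simp
    have hsum : ∀ jj : Fin n,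
        (x (Fin.castSucc jj) : ℝ) * ((N:ℝ) ^ c *
          (if ((Fin.castSucc jj : Fin (n+1)):ℕ) < n then P ((Fin.castSucc jj:Fin (n+1)):ℕ)
           else Real.log N))
        = (N:ℝ)^c * (((a jj : ℝ) - (b jj:ℝ)) * P (jj:ℕ)) := by
      intro jj
      have h0 : ((Fin.castSucc jj : Fin (n+1)):ℕ) = (jj:ℕ) := rfl
      have h2 : ((Fin.castSucc jj : Fin (n+1)):ℕ) < n := jj.isLt
      rw [if_pos h2, hxlt jj, h0]
      push_cast
      ring
    rw [Finset.sum_congr rfl (fun jj _ => hsum jj)]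
    rw [← Finset.mul_sum]
    have htab : ∑ jj : Fin n, ((a jj : ℝ) - (b jj:ℝ)) * P (jj:ℕ) = t a - t b := by
      rw [ht]
      rw [← Finset.sum_sub_distrib]
      exact Finset.sum_congr rfl (fun jj _ => by ring)
    rw [htab, if_neg hlast, hxlast]
    have hta : t a = s a * Real.log N := by rw [hs]; field_simp
    have htb : t b = s b * Real.log N := by rw [hs]; field_simp
    have hdeq : d = (s a - ⌊s a⌋) - (s b - ⌊s b⌋) := by rw [hd]; rfl
    push_cast
    rw [hta, htb, hdeq]
    ring
  clear_value V
  refine ⟨V, ?_, ⟨x, hV⟩, ?_⟩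
  · -- nonzero
    obtain ⟨i, hi⟩ := Function.ne_iff.mp hab
    intro hV0
    have h1 : V (Fin.castSucc i) = 0 := by rw [hV0]; rfl
    rw [hcomp1 i] at h1
    have hfne : (f (i:ℕ) : ℝ) ≠ 0 := by
      rcases hf1 (i:ℕ) i.isLt with h | h <;> rw [h] <;> norm_num
    have habne : ((a i : ℝ) - (b i : ℝ)) ≠ 0 := by
      intro h
      apply hi
      have h5 : ((a i : ℕ) : ℝ) = ((b i : ℕ) : ℝ) := by linarith
      have h6 : (a i : ℕ) = (b i : ℕ) := by exact_mod_cast h5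
      exact Fin.ext h6
    exact (mul_ne_zero habne hfne) h1
  · -- norm bound
    have hlastsq : V (Fin.last n) ^ 2 ≤ 1 := by
      have habs : |V (Fin.last n)| ≤ 1 := by
        rw [hcomp2, abs_mul, abs_mul]
        have h1 : |(N:ℝ)^c| = (N:ℝ)^c := abs_of_pos (by positivity)
        have h2 : |Real.log N| = Real.log N := abs_of_pos hlnN
        rw [h1, h2]
        have hd1 : |d| ≤ 1 / M := by
          rw [le_div_iff₀ hMpos]; linarith
        calc (N:ℝ)^c * (|d| * Real.log N) = ((N:ℝ)^c * Real.log N) * |d| := by ring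
        _ ≤ (M:ℝ) * (1 / M) := by
            apply mul_le_mul hKey hd1 (abs_nonneg _) hMpos.le
        _ = 1 := by field_simp
      calc V (Fin.last n) ^ 2 = |V (Fin.last n)| ^ 2 := (sq_abs _).symm
      _ ≤ 1 ^ 2 := by apply pow_le_pow_left₀ (abs_nonneg _) habs
      _ = 1 := one_pow 2
    have hjsq : ∀ jj : Fin n, V (Fin.castSucc jj) ^ 2 ≤ 4 * (K:ℝ)^2 := by
      intro jj
      rw [hcomp1]
      have hfle : (f (jj:ℕ) : ℝ) ^ 2 ≤ 4 := by
        rcases hf1 (jj:ℕ) jj.isLt with h | h <;> rw [h] <;> norm_num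
      have hale : ((a jj : ℝ) - (b jj:ℝ))^2 ≤ (K:ℝ)^2 := by
        have ha : ((a jj : ℕ) : ℝ) < K := by exact_mod_cast (a jj).isLt
        have hb : ((b jj : ℕ) : ℝ) < K := by exact_mod_cast (b jj).isLt
        have ha0 : (0:ℝ) ≤ ((a jj : ℕ) : ℝ) := by positivity
        have hb0 : (0:ℝ) ≤ ((b jj : ℕ) : ℝ) := by positivity
        nlinarith
      calc (((a jj : ℝ) - (b jj:ℝ)) * (f (jj:ℕ) : ℝ))^2
          = ((a jj : ℝ) - (b jj:ℝ))^2 * (f (jj:ℕ) : ℝ)^2 := by ring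
      _ ≤ (K:ℝ)^2 * 4 :=
          mul_le_mul hale hfle (by positivity) (by positivity)
      _ = 4 * (K:ℝ)^2 := by ring
    calc ∑ j, V j ^ 2 = ∑ jj : Fin n, V (Fin.castSucc jj)^2 + V (Fin.last n)^2 :=
          Fin.sum_univ_castSucc _
    _ ≤ ∑ _jj : Fin n, 4 * (K:ℝ)^2 + 1 :=
        add_le_add (Finset.sum_le_sum (fun jj _ => hjsq jj)) hlastsq
    _ = n * (4 * (K:ℝ)^2) + 1 := by rw [Finset.sum_const]; simp [mul_comm]
    _ ≤ n * (4 * (K:ℝ)^2) + n := by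
        have : (1:ℝ) ≤ n := by exact_mod_cast (by omega : 1 ≤ n)
        linarith
    _ = (4 * (K:ℝ)^2 + 1) * n := by ring
    _ ≤ (4 * (K:ℝ)^2 + 1) * (2 * Real.logb 2 N) :=
        mul_le_mul_of_nonneg_left hn_le (by positivity)
    _ = (8 * (K:ℝ)^2 + 2) * Real.logb 2 N := by ring
end

section
/- Existence of a short vector in the factoring lattice of sublinear dimension (Proposition 2): fix a real constant c > 0. There exists a constant C > 0, depending only on c, such that for every integer N with log₂ log₂ N > 1 the following holds. Let n = ⌈2c · log₂ N / log₂ log₂ N⌉, let p₁ < ⋯ < pₙ be the first n primes, let f : {1,…,n} → {1,2} take the value 2 exactly ⌈(n+1)/3⌉ times, and let Λ ⊆ ℝ^{n+1} be the ℤ-span of the n+1 vectors b_i = f(i)·e_i + N^c (ln p_i)·e_{n+1} for 1 ≤ i ≤ n and b_{n+1} = N^c (ln N)·e_{n+1}, with determinant det Λ (the absolute determinant of the matrix of these columns). If v ∈ Λ is a nonzero vector satisfying the density bound ‖v‖² ≤ (eπ/(2(n+1)))^{1/2} · (1.744·(n+1)/(2eπ)) · (det Λ)^{2/(n+1)}, then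 ‖v‖² ≤ C · √(log₂ N / log₂ log₂ N) · log₂ N. -/
open Real

set_option maxHeartbeats 4000000


lemma aux_one_add_half_sq_le_exp {t : ℝ} (ht : 0 ≤ t) :
    (1 + t / 2) ^ 2 ≤ Real.exp t := by
  have h := Real.add_one_le_exp (t / 2)
  have h2 : Real.exp t = Real.exp (t / 2) * Real.exp (t / 2) := by
    rw [← Real.exp_add]; ring_nf
  nlinarith [Real.exp_pos (t / 2)]

lemma aux_le_two_rpow {x : ℝ} (hx : 0 ≤ x) : x ≤ (2 : ℝ) ^ x := by
  rw [Real.rpow_def_of_pos (by norm_num)]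
  have hl : (0.6931471803 : ℝ) < Real.log 2 := Real.log_two_gt_d9
  have ht : 0 ≤ Real.log 2 * x := by positivity
  have h := aux_one_add_half_sq_le_exp ht
  nlinarith [sq_nonneg (x * (Real.log 2) ^ 2 - 2 * (1 - Real.log 2)), sq_nonneg (Real.log 2)]



/-- Existence of a short vector in the factoring lattice of sublinear dimension
(Proposition 2): for every `c > 0` there is a constant `C > 0` such that for all
integers `N` with `log₂ log₂ N > 1`, setting `n = ⌈2c·log₂ N / log₂ log₂ N⌉`, for
any diagonal function `f : {1,…,n} → {1,2}` taking the value `2` exactly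
`⌈(n+1)/3⌉` times, every nonzero lattice vector `v` satisfying the density bound
`‖v‖² ≤ (eπ/(2(n+1)))^(1/2) · (1.744(n+1)/(2eπ)) · (det Λ)^(2/(n+1))` satisfies
`‖v‖² ≤ C · √(log₂ N / log₂ log₂ N) · log₂ N`. -/
theorem short_vector_sublinear_dimension (c : ℝ) (hc : 0 < c) :
    ∃ C : ℝ, 0 < C ∧
      ∀ N : ℕ, 1 < Real.logb 2 (Real.logb 2 (N : ℝ)) →
        ∀ n : ℕ,
          n = ⌈2 * c * Real.logb 2 (N : ℝ) / Real.logb 2 (Real.logb 2 (N : ℝ))⌉₊ →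
          ∀ f : ℕ → ℕ,
            (∀ i < n, f i = 1 ∨ f i = 2) →
            ((Finset.range n).filter fun i => f i = 2).card = ⌈((n : ℝ) + 1) / 3⌉₊ →
            ∀ v : Fin (n + 1) → ℝ, v ≠ 0 →
              (∃ x : Fin (n + 1) → ℤ,
                v = ∑ i, (x i : ℝ) • factoringBasis N n c f i) →
              ∑ j, v j ^ 2 ≤
                  (Real.exp 1 * Real.pi / (2 * ((n : ℝ) + 1))) ^ ((1 : ℝ) / 2) *
                    (1.744 * ((n : ℝ) + 1) / (2 * Real.exp 1 * Real.pi)) *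
                    |(Matrix.of fun j i => factoringBasis N n c f i j :
                        Matrix (Fin (n + 1)) (Fin (n + 1)) ℝ).det| ^
                      ((2 : ℝ) / ((n : ℝ) + 1)) →
              ∑ j, v j ^ 2 ≤
                C * Real.sqrt (Real.logb 2 (N : ℝ) / Real.logb 2 (Real.logb 2 (N : ℝ))) *
                  Real.logb 2 (N : ℝ) := by
  set S : ℝ := Real.exp 1 * Real.pi with hSdef
  have hS : 0 < S := by positivity
  refine ⟨1.744 / (2 * S) * (S * (2 * c + 2) / 2) ^ ((1 : ℝ) / 2) *
      (4 * Real.exp (4 / (c * Real.log 2))), by positivity, ?_⟩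
  intro N hl n hn f hf _hcard v _hv _hx hbound
  set L : ℝ := Real.logb 2 (N : ℝ) with hLdef
  set l : ℝ := Real.logb 2 L with hldef
  have hlog2 : (0 : ℝ) < Real.log 2 := Real.log_pos (by norm_num)
  -- basic bounds
  have hL0 : 0 ≤ L := by
    rcases Nat.eq_zero_or_pos N with h | h
    · simp [hLdef, h]
    · exact Real.logb_nonneg (by norm_num) (by exact_mod_cast h)
  have hL2 : 2 < L := by
    by_contra h
    push_neg at h
    have : l ≤ 1 := by
      rcases eq_or_lt_of_le hL0 with h0 | h0
      · simp [hldef, ← h0]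
      · calc l ≤ Real.logb 2 2 := Real.logb_le_logb_of_le (by norm_num) h0 h
          _ = 1 := Real.logb_self_eq_one (by norm_num)
    linarith
  have hLpos : (0 : ℝ) < L := by linarith
  have hl0 : (0 : ℝ) < l := by linarith
  have hN0 : (0 : ℝ) < (N : ℝ) := by
    rcases Nat.eq_zero_or_pos N with h | h
    · exfalso; rw [hLdef, h] at hL2; norm_num at hL2
    · exact_mod_cast h
  have hNL : (N : ℝ) = (2 : ℝ) ^ L := (Real.rpow_logb (by norm_num) (by norm_num) hN0).symm
  have h2l : (2 : ℝ) ^ l = L := Real.rpow_logb (by norm_num) (by norm_num) hLpos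
  have hN4 : (4 : ℝ) < (N : ℝ) := by
    have : (2 : ℝ) ^ (2 : ℝ) < (2 : ℝ) ^ L :=
      Real.rpow_lt_rpow_of_exponent_lt (by norm_num) hL2
    rw [← hNL] at this
    calc (4 : ℝ) = (2 : ℝ) ^ (2 : ℝ) := by
          rw [show (2 : ℝ) = ((2 : ℕ) : ℝ) by norm_num, Real.rpow_natCast]; norm_num
      _ < (N : ℝ) := this
  have hlogN1 : 1 < Real.log N := by
    have h4 : Real.log 4 < Real.log N := Real.log_lt_log (by norm_num) hN4
    have : Real.log 4 = 2 * Real.log 2 := by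
      rw [show (4 : ℝ) = 2 ^ (2 : ℕ) by norm_num, Real.log_pow]; push_cast; ring
    nlinarith [Real.log_two_gt_d9]
  have hlogN0 : (0 : ℝ) < Real.log N := by linarith
  -- identities log N = L log 2, log L = l log 2
  have hlogNL : Real.log N = L * Real.log 2 := by
    rw [hLdef, Real.logb]; field_simp
  have hlogLl : Real.log L = l * Real.log 2 := by
    rw [hldef, Real.logb]; field_simp
  -- n bounds
  have hq : (0 : ℝ) < 2 * c * L / l := by positivity
  have hnl : 2 * c * L / l ≤ (n : ℝ) := by rw [hn]; exact_mod_cast Nat.le_ceil _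
  have hnu : (n : ℝ) < 2 * c * L / l + 1 := by
    rw [hn]; exact_mod_cast Nat.ceil_lt_add_one hq.le
  set m : ℝ := (n : ℝ) + 1 with hmdef
  have hm0 : (0 : ℝ) < m := by positivity
  have hml : 2 * c * L ≤ m * l := by
    have := (div_le_iff₀ hl0).mp hnl
    nlinarith
  have hllL : l ≤ L := h2l ▸ aux_le_two_rpow hl0.le
  have hLl1 : 1 ≤ L / l := (one_le_div hl0).mpr hllL
  have hmu : m ≤ (2 * c + 2) * (L / l) := by
    have h1 : m ≤ 2 * c * (L / l) + 2 := by
      have : 2 * c * L / l = 2 * c * (L / l) := by ring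
      rw [hmdef]; linarith [hnu, this ▸ hnu]
    nlinarith
  set e : ℝ := 2 / m with hedef
  have he0 : 0 < e := by positivity
  -- determinant bound
  set M : Matrix (Fin (n + 1)) (Fin (n + 1)) ℝ :=
    Matrix.of fun j i => factoringBasis N n c f i j with hMdef
  have hbound2 : ∑ j, v j ^ 2 ≤
      (S / (2 * m)) ^ ((1 : ℝ) / 2) * (1.744 * m / (2 * S)) * |M.det| ^ e := by
    rw [hSdef, ← mul_assoc 2 (Real.exp 1) Real.pi]
    exact hbound
  clear hbound
  have hMtri : M.BlockTriangular OrderDual.toDual := by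
    intro i j hij
    have hij' : (i : ℕ) < (j : ℕ) := hij
    have h1 : ¬((i : ℕ) = (j : ℕ) ∧ (j : ℕ) < n) := by omega
    have h2 : (i : ℕ) ≠ n := by omega
    simp [hMdef, factoringBasis, h1, h2]
  have hdet : M.det = ∏ i : Fin (n + 1), M i i := Matrix.det_of_lowerTriangular M hMtri
  have hdiag : ∀ i : Fin (n + 1),
      |M i i| ≤ if (i : ℕ) < n then 2 else (N : ℝ) ^ c * Real.log N := by
    intro i
    by_cases hi : (i : ℕ) < n
    · have hin : (i : ℕ) ≠ n := by omega
      have : M i i = (f i : ℝ) := by simp [hMdef, factoringBasis, hi, hin]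
      rw [this, if_pos hi]
      rcases hf i hi with h | h <;> rw [h] <;> norm_num
    · have hin : (i : ℕ) = n := by omega
      have : M i i = (N : ℝ) ^ c * Real.log N := by
        simp [hMdef, factoringBasis, hi, hin]
      rw [this, if_neg hi, abs_of_nonneg (by positivity)]
  have hDle : |M.det| ≤ 2 ^ n * ((N : ℝ) ^ c * Real.log N) := by
    rw [hdet, Finset.abs_prod]
    calc ∏ i : Fin (n + 1), |M i i|
        ≤ ∏ i : Fin (n + 1), (if (i : ℕ) < n then 2 else (N : ℝ) ^ c * Real.log N) :=
          Finset.prod_le_prod (fun i _ => abs_nonneg _) (fun i _ => hdiag i)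
      _ = 2 ^ n * ((N : ℝ) ^ c * Real.log N) := by
          rw [Fin.prod_univ_castSucc]
          have h1 : ∀ i : Fin n,
              (if ((Fin.castSucc i : Fin (n + 1)) : ℕ) < n then (2 : ℝ)
                else (N : ℝ) ^ c * Real.log N) = 2 := by
            intro i; rw [if_pos]; simpa using i.isLt
          have h2 : ¬(((Fin.last n : Fin (n + 1)) : ℕ) < n) := by simp
          simp [h1, h2]
  clear_value M
  -- rpow bound on the determinant
  have hK1 : |M.det| ^ e ≤ 4 * L * Real.exp (4 / (c * Real.log 2)) := by
    have step1 : |M.det| ^ e ≤ ((2 : ℝ) ^ n * ((N : ℝ) ^ c * Real.log N)) ^ e :=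
      Real.rpow_le_rpow (abs_nonneg _) hDle he0.le
    have split : ((2 : ℝ) ^ n * ((N : ℝ) ^ c * Real.log N)) ^ e =
        ((2 : ℝ) ^ n) ^ e * ((N : ℝ) ^ c) ^ e * (Real.log N) ^ e := by
      rw [Real.mul_rpow (by positivity) (by positivity),
          Real.mul_rpow (by positivity) (by positivity)]
      ring
    have b1 : ((2 : ℝ) ^ n) ^ e ≤ 4 := by
      rw [← Real.rpow_natCast 2 n, ← Real.rpow_mul (by norm_num)]
      calc (2 : ℝ) ^ ((n : ℝ) * e) ≤ (2 : ℝ) ^ (2 : ℝ) := by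
            apply Real.rpow_le_rpow_of_exponent_le (by norm_num)
            rw [hedef, mul_div_assoc']
            rw [div_le_iff₀ hm0]
            nlinarith
        _ = 4 := by
            rw [show (2 : ℝ) = ((2 : ℕ) : ℝ) by norm_num, Real.rpow_natCast]; norm_num
    have b2 : ((N : ℝ) ^ c) ^ e ≤ L := by
      rw [← Real.rpow_mul hN0.le]
      conv_lhs => rw [hNL]
      rw [← Real.rpow_mul (by norm_num)]
      calc (2 : ℝ) ^ (L * (c * e)) ≤ (2 : ℝ) ^ l := by
            apply Real.rpow_le_rpow_of_exponent_le (by norm_num)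
            rw [hedef]
            rw [show L * (c * (2 / m)) = 2 * c * L / m by ring, div_le_iff₀ hm0]
            nlinarith
        _ = L := h2l
    have b3 : (Real.log N) ^ e ≤ Real.exp (4 / (c * Real.log 2)) := by
      rw [Real.rpow_def_of_pos hlogN0]
      apply Real.exp_le_exp.mpr
      have hloglogN : Real.log (Real.log N) ≤ Real.log L := by
        rw [hlogNL, Real.log_mul hLpos.ne' hlog2.ne']
        have : Real.log (Real.log 2) < 0 :=
          Real.log_neg hlog2 (by nlinarith [Real.log_two_lt_d9])
        linarith
      have hll : Real.log L = l * Real.log 2 := hlogLl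
      have he_le : e ≤ l / (c * L) := by
        rw [hedef, div_le_div_iff₀ hm0 (by positivity)]
        nlinarith
      have hlogpos : 0 < Real.log (Real.log N) := Real.log_pos hlogN1
      have hstep : Real.log (Real.log N) * e ≤ (l * Real.log 2) * (l / (c * L)) := by
        apply mul_le_mul (hll ▸ hloglogN) he_le he0.le (by positivity)
      have hl2L : l ^ 2 * (Real.log 2) ^ 2 ≤ 4 * L := by
        have ht : 0 ≤ Real.log 2 * l := by positivity
        have := aux_one_add_half_sq_le_exp ht
        have hLexp : Real.exp (Real.log 2 * l) = L := by
          rw [← Real.rpow_def_of_pos (by norm_num : (0:ℝ) < 2)]; exact h2l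
        nlinarith
      calc Real.log (Real.log N) * e ≤ (l * Real.log 2) * (l / (c * L)) := hstep
        _ = (l ^ 2 * Real.log 2) / (c * L) := by ring
        _ ≤ 4 / (c * Real.log 2) := by
            rw [div_le_div_iff₀ (by positivity) (by positivity)]
            nlinarith
    calc |M.det| ^ e ≤ ((2 : ℝ) ^ n) ^ e * ((N : ℝ) ^ c) ^ e * (Real.log N) ^ e := by
          rw [← split]; exact step1
      _ ≤ 4 * L * Real.exp (4 / (c * Real.log 2)) := by
          gcongr <;> positivity
  -- assemble
  have hDnn : (0 : ℝ) ≤ |M.det| ^ e := Real.rpow_nonneg (abs_nonneg _) e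
  have key : (S / (2 * m)) ^ ((1 : ℝ) / 2) * m = (S * m / 2) ^ ((1 : ℝ) / 2) := by
    have hmsq : (m ^ (2 : ℕ)) ^ ((1 : ℝ) / 2) = m := by
      rw [← Real.rpow_natCast m 2, ← Real.rpow_mul hm0.le]
      norm_num
    have h1 : S * m / 2 = S / (2 * m) * m ^ (2 : ℕ) := by
      field_simp [hm0.ne']
    rw [h1, Real.mul_rpow (div_nonneg hS.le (by linarith)) (by positivity), hmsq]
  have hbound' : ∑ j, v j ^ 2 ≤
      1.744 / (2 * S) * ((S * m / 2) ^ ((1 : ℝ) / 2)) * (|M.det| ^ e) := by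
    calc ∑ j, v j ^ 2 ≤ (S / (2 * m)) ^ ((1 : ℝ) / 2) *
          (1.744 * m / (2 * S)) * (|M.det| ^ e) := hbound2
      _ = 1.744 / (2 * S) * ((S / (2 * m)) ^ ((1 : ℝ) / 2) * m) * (|M.det| ^ e) := by ring
      _ = 1.744 / (2 * S) * ((S * m / 2) ^ ((1 : ℝ) / 2)) * (|M.det| ^ e) := by rw [key]
  have hsplit2 : (S * ((2 * c + 2) * (L / l)) / 2) ^ ((1 : ℝ) / 2) =
      (S * (2 * c + 2) / 2) ^ ((1 : ℝ) / 2) * (L / l) ^ ((1 : ℝ) / 2) := by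
    rw [← Real.mul_rpow (by positivity) (by positivity)]
    congr 1
    ring
  calc ∑ j, v j ^ 2 ≤ 1.744 / (2 * S) * ((S * m / 2) ^ ((1 : ℝ) / 2)) * (|M.det| ^ e) :=
        hbound'
    _ ≤ 1.744 / (2 * S) * ((S * ((2 * c + 2) * (L / l)) / 2) ^ ((1 : ℝ) / 2)) *
        (4 * L * Real.exp (4 / (c * Real.log 2))) := by
        gcongr
        all_goals first
          | exact hK1
          | exact hmu
          | positivity
          | linarith
          | exact Real.rpow_nonneg (mul_nonneg (mul_nonneg hS.le (by linarith)) (by norm_num)) _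
    _ = 1.744 / (2 * S) * (S * (2 * c + 2) / 2) ^ ((1 : ℝ) / 2) *
        (4 * Real.exp (4 / (c * Real.log 2))) * (L / l) ^ ((1 : ℝ) / 2) * L := by
        rw [hsplit2]; ring
    _ = 1.744 / (2 * S) * (S * (2 * c + 2) / 2) ^ ((1 : ℝ) / 2) *
        (4 * Real.exp (4 / (c * Real.log 2))) * Real.sqrt (L / l) * L := by
        rw [Real.sqrt_eq_rpow]
end

section
/- Lower bound relating lattice distance to smooth pairs, with equality condition: let n ≥ 1, let p₁ < ⋯ < pₙ be the first n primes, let c > 0 be real and N ≥ 2 an integer. Define b_i = √(ln p_i)·e_i + N^c (ln p_i)·e_{n+1} ∈ ℝ^{n+1} for 1 ≤ i ≤ n, and t = N^c (ln N)·e_{n+1}. For any e ∈ ℤ^n let b = Σ_{i=1}^n e_i b_i, u = ∏_{i : e_i > 0} p_i^{e_i} and v = ∏_{i : e_i < 0} p_i^{−e_i}. Then ‖b − t‖² ≥ ln(u v) + N^{2c} · |ln(u/(vN))|², and equality holds if and only if e_i ∈ {−1, 0, 1} for every i. -/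
/-- The basis vectors of the prime lattice in `ℝ^(n+1)`:
`b_i = √(ln p_i)·e_i + N^c (ln p_i)·e_{n+1}` for `1 ≤ i ≤ n`, where `p_i` is the
`i`-th prime (`p₁ = 2` corresponds to index `0`). -/
noncomputable def primeBasis (N n : ℕ) (c : ℝ) : Fin n → Fin (n + 1) → ℝ := fun i j =>
  (if (j : ℕ) = (i : ℕ) then Real.sqrt (Real.log (Nat.nth Nat.Prime i)) else 0) +
  (if (j : ℕ) = n then (N : ℝ) ^ c * Real.log (Nat.nth Nat.Prime i) else 0)

/-- The target vector `t = N^c (ln N)·e_{n+1} ∈ ℝ^(n+1)`. -/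
noncomputable def targetVec (N n : ℕ) (c : ℝ) : Fin (n + 1) → ℝ := fun j =>
  if (j : ℕ) = n then (N : ℝ) ^ c * Real.log N else 0

/-! Coordinatewise, `‖b - t‖² = ∑ eᵢ² ln pᵢ + N^{2c} (∑ eᵢ ln pᵢ - ln N)²`, while
`ln (uv) = ∑ |eᵢ| ln pᵢ` and `ln (u/v) = ∑ eᵢ ln pᵢ`. The claim thus reduces to `|m| ≤ m²` for
integers `m`, with equality exactly when `|m| ≤ 1`, summed against the positive weights `ln pᵢ`. -/

open Finset

theorem Int.abs_le_sq (m : ℤ) : |m| ≤ m ^ 2 :=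
  Int.natCast_natAbs m ▸ Int.natAbs_le_self_sq m

theorem Int.abs_eq_sq_iff (m : ℤ) : |m| = m ^ 2 ↔ m = -1 ∨ m = 0 ∨ m = 1 := by
  rw [← sq_abs]
  constructor
  · intro h
    have : |m| * (|m| - 1) = 0 := by linear_combination -h
    rcases mul_eq_zero.1 this with h0 | h1
    · simp [abs_eq_zero.1 h0]
    · rcases (abs_eq zero_le_one).1 (sub_eq_zero.1 h1) with h | h <;> simp [h]
  · rintro (rfl | rfl | rfl) <;> norm_num

theorem Int.natCast_toNat_sub_natCast_toNat_neg {R : Type*} [AddGroupWithOne R] (m : ℤ) :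
    ((m.toNat : ℕ) : R) - ((-m).toNat : ℕ) = m := by
  rw [← Int.cast_natCast, ← Int.cast_natCast (R := R) (-m).toNat, ← Int.cast_sub,
    Int.toNat_sub_toNat_neg]

theorem Int.natCast_toNat_add_natCast_toNat_neg {R : Type*} [Ring R] [LinearOrder R]
    [IsStrictOrderedRing R] (m : ℤ) : ((m.toNat : ℕ) : R) + ((-m).toNat : ℕ) = |(m : R)| := by
  rw [← Nat.cast_add, Int.toNat_add_toNat_neg_eq_natAbs, Nat.cast_natAbs, Int.cast_abs]

section WeightedSums

theorem abs_intCast_mul_le_sq_mul (m : ℤ) {w : ℝ} (hw : 0 ≤ w) : |(m : ℝ)| * w ≤ (m : ℝ) ^ 2 * w :=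
  mul_le_mul_of_nonneg_right (by exact_mod_cast Int.abs_le_sq m) hw

variable {ι : Type*} [Fintype ι] (e : ι → ℤ) (w : ι → ℝ)

theorem sum_abs_mul_le_sum_sq_mul (hw : ∀ i, 0 ≤ w i) :
    ∑ i, |(e i : ℝ)| * w i ≤ ∑ i, (e i : ℝ) ^ 2 * w i :=
  sum_le_sum fun i _ => abs_intCast_mul_le_sq_mul (e i) (hw i)

theorem sum_abs_mul_eq_sum_sq_mul_iff (hw : ∀ i, 0 < w i) :
    ∑ i, |(e i : ℝ)| * w i = ∑ i, (e i : ℝ) ^ 2 * w i ↔ ∀ i, e i = -1 ∨ e i = 0 ∨ e i = 1 := by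
  rw [sum_eq_sum_iff_of_le fun i _ => abs_intCast_mul_le_sq_mul (e i) (hw i).le]
  refine forall_congr' fun i => ?_
  rw [← Int.abs_eq_sq_iff, mul_left_inj' (hw i).ne', imp_iff_right (mem_univ i)]
  norm_cast

end WeightedSums

theorem Real.log_natCast_prod_pow_toNat {ι : Type*} (s : Finset ι) (P : ι → Prop)
    [DecidablePred P] (p : ι → ℕ) (k : ι → ℤ) (hp : ∀ i ∈ s, p i ≠ 0)
    (hP : ∀ i ∈ s, 0 < k i → P i) :
    Real.log ((∏ i ∈ s with P i, p i ^ (k i).toNat : ℕ) : ℝ) =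
      ∑ i ∈ s, ((k i).toNat : ℝ) * Real.log (p i) := by
  rw [prod_filter_of_ne fun i hi hne => hP i hi (by
    by_contra hk
    simp [Int.toNat_eq_zero.2 (not_lt.1 hk)] at hne)]
  push_cast
  rw [Real.log_prod fun i hi => pow_ne_zero _ (Nat.cast_ne_zero.2 (hp i hi))]
  simp only [Real.log_pow]

section PrimeLattice

variable {N n : ℕ} {c : ℝ}

theorem primeBasis_castSucc (i j : Fin n) :
    primeBasis N n c i j.castSucc = if j = i then √(Real.log (Nat.nth Nat.Prime i)) else 0 := by
  simp [primeBasis, Fin.val_eq_val, j.isLt.ne]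

theorem primeBasis_last (i : Fin n) :
    primeBasis N n c i (Fin.last n) = (N : ℝ) ^ c * Real.log (Nat.nth Nat.Prime i) := by
  simp [primeBasis, i.isLt.ne']

theorem targetVec_castSucc (j : Fin n) : targetVec N n c j.castSucc = 0 := by
  simp [targetVec, j.isLt.ne]

theorem targetVec_last : targetVec N n c (Fin.last n) = (N : ℝ) ^ c * Real.log N := by
  simp [targetVec]

theorem sum_smul_primeBasis_castSucc (x : Fin n → ℝ) (j : Fin n) :
    (∑ i, x i • primeBasis N n c i) j.castSucc = x j * √(Real.log (Nat.nth Nat.Prime j)) := by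
  simp [Finset.sum_apply, primeBasis_castSucc]

theorem sum_smul_primeBasis_last (x : Fin n → ℝ) :
    (∑ i, x i • primeBasis N n c i) (Fin.last n) =
      (N : ℝ) ^ c * ∑ i, x i * Real.log (Nat.nth Nat.Prime i) := by
  simp only [Finset.sum_apply, Pi.smul_apply, primeBasis_last, smul_eq_mul, mul_sum]
  exact sum_congr rfl fun i _ => mul_left_comm _ _ _

theorem sum_sq_sub_targetVec (x : Fin n → ℝ) :
    ∑ j, ((∑ i, x i • primeBasis N n c i) j - targetVec N n c j) ^ 2 =
      ∑ i, x i ^ 2 * Real.log (Nat.nth Nat.Prime i) +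
        (N : ℝ) ^ (2 * c) * (∑ i, x i * Real.log (Nat.nth Nat.Prime i) - Real.log N) ^ 2 := by
  have hpow : (N : ℝ) ^ (2 * c) = ((N : ℝ) ^ c) ^ 2 := by
    rw [mul_comm, Real.rpow_mul (Nat.cast_nonneg N), Real.rpow_two]
  have hlog (i : Fin n) : 0 ≤ Real.log (Nat.nth Nat.Prime i) :=
    Real.log_natCast_nonneg _
  simp only [Fin.sum_univ_castSucc, sum_smul_primeBasis_castSucc, sum_smul_primeBasis_last,
    targetVec_castSucc, targetVec_last, sub_zero, mul_pow, Real.sq_sqrt (hlog _), hpow]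
  ring

end PrimeLattice

theorem prime_lattice_distance_lower_bound_general
    (n : ℕ) (c : ℝ) (N : ℕ)
    (e : Fin n → ℤ) (u v : ℕ)
    (hu : u = ∏ i ∈ Finset.univ.filter fun i => 0 < e i,
        Nat.nth Nat.Prime i ^ (e i).toNat)
    (hv : v = ∏ i ∈ Finset.univ.filter fun i => e i < 0,
        Nat.nth Nat.Prime i ^ (-e i).toNat) :
    (Real.log (u * v : ℕ) +
        (N : ℝ) ^ (2 * c) * |Real.log u - Real.log v - Real.log N| ^ 2 ≤
      ∑ j, ((∑ i, (e i : ℝ) • primeBasis N n c i) j - targetVec N n c j) ^ 2) ∧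
    ((∑ j, ((∑ i, (e i : ℝ) • primeBasis N n c i) j - targetVec N n c j) ^ 2 =
        Real.log (u * v : ℕ) +
          (N : ℝ) ^ (2 * c) * |Real.log u - Real.log v - Real.log N| ^ 2) ↔
      ∀ i, e i = -1 ∨ e i = 0 ∨ e i = 1) := by
  set L : Fin n → ℝ := fun i => Real.log (Nat.nth Nat.Prime i)
  have hL (i : Fin n) : 0 < L i :=
    Real.log_pos (Nat.one_lt_cast.2 (Nat.prime_nth_prime i).one_lt)
  have hp : ∀ i ∈ (univ : Finset (Fin n)), Nat.nth Nat.Prime (i : ℕ) ≠ 0 :=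
    fun i _ => (Nat.prime_nth_prime i).ne_zero
  have hlogu : Real.log u = ∑ i, ((e i).toNat : ℝ) * L i := by
    rw [hu]; exact Real.log_natCast_prod_pow_toNat _ _ _ _ hp fun _ _ h => h
  have hlogv : Real.log v = ∑ i, ((-e i).toNat : ℝ) * L i := by
    rw [hv]; exact Real.log_natCast_prod_pow_toNat _ _ _ _ hp fun _ _ h => neg_pos.1 h
  have hu0 : u ≠ 0 := hu ▸ prod_ne_zero_iff.2 fun i _ => pow_ne_zero _ (hp i (mem_univ i))
  have hv0 : v ≠ 0 := hv ▸ prod_ne_zero_iff.2 fun i _ => pow_ne_zero _ (hp i (mem_univ i))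
  have hlog_mul : Real.log (u * v : ℕ) = ∑ i, |(e i : ℝ)| * L i := by
    rw [Nat.cast_mul, Real.log_mul (Nat.cast_ne_zero.2 hu0) (Nat.cast_ne_zero.2 hv0), hlogu, hlogv,
      ← sum_add_distrib]
    simp only [← add_mul, Int.natCast_toNat_add_natCast_toNat_neg]
  have hlog_div : Real.log u - Real.log v = ∑ i, (e i : ℝ) * L i := by
    rw [hlogu, hlogv, ← sum_sub_distrib]
    simp only [← sub_mul, Int.natCast_toNat_sub_natCast_toNat_neg]
  rw [sum_sq_sub_targetVec, hlog_mul, hlog_div, sq_abs, add_left_inj, eq_comm]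
  exact ⟨add_le_add_left (sum_abs_mul_le_sum_sq_mul e L fun i => (hL i).le) _,
    sum_abs_mul_eq_sum_sq_mul_iff e L hL⟩

/-- Lower bound relating lattice distance to smooth pairs, with equality
condition: for `b = ∑ eᵢ bᵢ`, `u = ∏_{eᵢ>0} pᵢ^{eᵢ}` and `v = ∏_{eᵢ<0} pᵢ^{-eᵢ}`,
`‖b − t‖² ≥ ln(uv) + N^{2c} |ln(u/(vN))|²`, with equality iff every `eᵢ ∈ {−1,0,1}`. -/
theorem prime_lattice_distance_lower_bound
    (n : ℕ) (hn : 1 ≤ n) (c : ℝ) (hc : 0 < c) (N : ℕ) (hN : 2 ≤ N)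
    (e : Fin n → ℤ) (u v : ℕ)
    (hu : u = ∏ i ∈ Finset.univ.filter fun i => 0 < e i,
        Nat.nth Nat.Prime i ^ (e i).toNat)
    (hv : v = ∏ i ∈ Finset.univ.filter fun i => e i < 0,
        Nat.nth Nat.Prime i ^ (-e i).toNat) :
    (Real.log (u * v : ℕ) +
        (N : ℝ) ^ (2 * c) * |Real.log u - Real.log v - Real.log N| ^ 2 ≤
      ∑ j, ((∑ i, (e i : ℝ) • primeBasis N n c i) j - targetVec N n c j) ^ 2) ∧
    ((∑ j, ((∑ i, (e i : ℝ) • primeBasis N n c i) j - targetVec N n c j) ^ 2 =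
        Real.log (u * v : ℕ) +
          (N : ℝ) ^ (2 * c) * |Real.log u - Real.log v - Real.log N| ^ 2) ↔
      ∀ i, e i = -1 ∨ e i = 0 ∨ e i = 1) :=
  prime_lattice_distance_lower_bound_general n c N e u v hu hv
end

section
/- Round-robin construction of a one-factorization: let n ≥ 1 and consider the vertex set V = (ℤ/(2n−1)ℤ) ∪ {∗}, which has 2n elements. For each i ∈ ℤ/(2n−1)ℤ define the edge set M_i = { {i, ∗} } ∪ { {i + k, i − k} : k = 1, …, n − 1 }, where arithmetic is modulo 2n − 1. Then: (a) each M_i is a perfect matching of the complete graph on V (it consists of n edges covering every vertex exactly once); (b) for i ≠ j the matchings M_i and M_j are edge-disjoint; (c) the union of the M_i over all i ∈ ℤ/(2n−1)ℤ is the set of all 2-element subsets of V. -/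
private lemma rr_ne_zero (n : ℕ) (hn : 1 ≤ n) {k : ℕ} (hk1 : 1 ≤ k) (hk2 : k ≤ n - 1) :
    (k : ZMod (2 * n - 1)) ≠ 0 := by
  haveI : NeZero (2 * n - 1) := ⟨by omega⟩
  rw [Ne, ZMod.natCast_eq_zero_iff]
  intro h
  have := Nat.le_of_dvd (by omega) h
  omega

private lemma rr_add_ne (n : ℕ) (hn : 1 ≤ n) {k k' : ℕ} (hk1 : 1 ≤ k) (hk2 : k ≤ n - 1)
    (hk'1 : 1 ≤ k') (hk'2 : k' ≤ n - 1) : (k : ZMod (2 * n - 1)) + (k' : ZMod (2 * n - 1)) ≠ 0 := by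
  haveI : NeZero (2 * n - 1) := ⟨by omega⟩
  have : ((k + k' : ℕ) : ZMod (2 * n - 1)) ≠ 0 := by
    rw [Ne, ZMod.natCast_eq_zero_iff]
    intro h
    have := Nat.le_of_dvd (by omega) h
    omega
  simpa using this

private lemma rr_cast_inj (n : ℕ) (hn : 1 ≤ n) {k k' : ℕ} (hk : k ≤ n - 1) (hk' : k' ≤ n - 1)
    (h : (k : ZMod (2 * n - 1)) = (k' : ZMod (2 * n - 1))) : k = k' := by
  haveI : NeZero (2 * n - 1) := ⟨by omega⟩
  have := congrArg ZMod.val h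
  rwa [ZMod.val_cast_of_lt (by omega), ZMod.val_cast_of_lt (by omega)] at this

private lemma rr_two_cancel (n : ℕ) (hn : 1 ≤ n) {a b : ZMod (2 * n - 1)}
    (h : a + a = b + b) : a = b := by
  haveI : NeZero (2 * n - 1) := ⟨by omega⟩
  have h2 : IsUnit (2 : ZMod (2 * n - 1)) := by
    have := (ZMod.isUnit_iff_coprime 2 (2 * n - 1)).mpr
      (Nat.coprime_two_left.mpr ⟨n - 1, by omega⟩)
    simpa using this
  have : (2 : ZMod (2 * n - 1)) * a = 2 * b := by ring_nf; linear_combination h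
  exact h2.mul_right_injective this

private lemma rr_rep (n : ℕ) (hn : 1 ≤ n) {d : ZMod (2 * n - 1)} (hd : d ≠ 0) :
    ∃ k : ℕ, 1 ≤ k ∧ k ≤ n - 1 ∧
      ((k : ZMod (2 * n - 1)) = d ∨ (k : ZMod (2 * n - 1)) = -d) := by
  haveI : NeZero (2 * n - 1) := ⟨by omega⟩
  have hv1 : d.val < 2 * n - 1 := ZMod.val_lt d
  have hv0 : d.val ≠ 0 := fun h => hd ((ZMod.val_eq_zero d).mp h)
  have hvd : ((d.val : ℕ) : ZMod (2 * n - 1)) = d := ZMod.natCast_rightInverse d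
  by_cases h : d.val ≤ n - 1
  · exact ⟨d.val, by omega, h, Or.inl hvd⟩
  · refine ⟨2 * n - 1 - d.val, by omega, by omega, Or.inr ?_⟩
    rw [Nat.cast_sub (by omega), ZMod.natCast_self, zero_sub, hvd]

private lemma rr_shared (n : ℕ) (hn : 1 ≤ n) {i : ZMod (2 * n - 1)} {k k' : ℕ}
    (hk1 : 1 ≤ k) (hk2 : k ≤ n - 1) (hk'1 : 1 ≤ k') (hk'2 : k' ≤ n - 1) {w : ZMod (2 * n - 1)}
    (h1 : w = i + k ∨ w = i - k) (h2 : w = i + k' ∨ w = i - k') : k = k' := by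
  rcases h1 with rfl | rfl <;> rcases h2 with h | h
  · exact rr_cast_inj n hn hk2 hk'2 (by linear_combination h)
  · exact absurd (by linear_combination h) (rr_add_ne n hn hk1 hk2 hk'1 hk'2)
  · exact absurd (by linear_combination -h) (rr_add_ne n hn hk1 hk2 hk'1 hk'2)
  · exact rr_cast_inj n hn hk2 hk'2 (by linear_combination -h)

/-- Round-robin construction of a one-factorization: on the vertex set
`V = (ℤ/(2n−1)ℤ) ∪ {∗}` (modelled as `Option (ZMod (2n−1))`, with `∗ = none`),
define for each `i` the edge set
`M i = {{i,∗}} ∪ {{i+k, i−k} : 1 ≤ k ≤ n−1}`. Then (a) each `M i` is a perfect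
matching of the complete graph on `V` consisting of `n` edges covering every
vertex exactly once, (b) distinct `M i`, `M j` are edge-disjoint, and (c) the
union of the `M i` is the set of all 2-element subsets of `V`. -/
theorem round_robin_one_factorization (n : ℕ) (hn : 1 ≤ n)
    (M : ZMod (2 * n - 1) → Set (Sym2 (Option (ZMod (2 * n - 1)))))
    (hM : ∀ i, M i =
      {e | e = s(some i, none) ∨
        ∃ k : ℕ, 1 ≤ k ∧ k ≤ n - 1 ∧
          e = s(some (i + (k : ZMod (2 * n - 1))), some (i - (k : ZMod (2 * n - 1))))}) :
    (∀ i, (∀ e ∈ M i, ¬ e.IsDiag) ∧ (M i).ncard = n ∧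
      ∀ v : Option (ZMod (2 * n - 1)), ∃! e, e ∈ M i ∧ v ∈ e) ∧
    (∀ i j, i ≠ j → Disjoint (M i) (M j)) ∧
    (⋃ i, M i) = {e : Sym2 (Option (ZMod (2 * n - 1))) | ¬ e.IsDiag} := by
  have nondiag : ∀ i, ∀ e ∈ M i, ¬ e.IsDiag := by
    intro i e he
    rw [hM] at he
    rcases he with rfl | ⟨k, hk1, hk2, rfl⟩
    · simp
    · simp only [Sym2.isDiag_iff_proj_eq, Option.some.injEq]
      intro h
      exact rr_add_ne n hn hk1 hk2 hk1 hk2 (by linear_combination h)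
  refine ⟨fun i => ⟨nondiag i, ?_, ?_⟩, ?_, ?_⟩
  · -- cardinality
    have hset : M i = (fun k : ℕ => if k = 0 then s(some i, (none : Option (ZMod (2 * n - 1))))
        else s(some (i + (k : ZMod (2 * n - 1))), some (i - (k : ZMod (2 * n - 1))))) ''
        (Set.Iio n) := by
      rw [hM]
      ext e
      simp only [Set.mem_image, Set.mem_Iio, Set.mem_setOf_eq]
      constructor
      · rintro (rfl | ⟨k, hk1, hk2, rfl⟩)
        · exact ⟨0, by omega, by simp⟩
        · have hk0 : ¬ k = 0 := by omega
          exact ⟨k, by omega, by simp [hk0]⟩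
      · rintro ⟨k, hk, rfl⟩
        by_cases h0 : k = 0
        · subst h0; simp
        · exact Or.inr ⟨k, by omega, by omega, by simp [h0]⟩
    rw [hset, Set.ncard_image_of_injOn, ← Finset.coe_Iio, Set.ncard_coe_finset, Nat.card_Iio]
    intro k hk k' hk' h
    simp only [Set.mem_Iio] at hk hk'
    by_cases h0 : k = 0 <;> by_cases h0' : k' = 0
    · omega
    · subst h0; simp only [if_pos, if_neg h0', Sym2.eq_iff] at h; simp at h
    · subst h0'; simp only [if_pos, if_neg h0, Sym2.eq_iff] at h; simp at h
    · simp only [if_neg h0, if_neg h0', Sym2.eq_iff, Option.some.injEq] at h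
      rcases h with ⟨h1, h2⟩ | ⟨h1, h2⟩
      · exact rr_cast_inj n hn (by omega) (by omega) (by linear_combination h1)
      · have hcon : (k : ZMod (2 * n - 1)) + (k' : ZMod (2 * n - 1)) = 0 := by
          linear_combination h1
        exact absurd hcon (rr_add_ne n hn (by omega) (by omega) (by omega) (by omega))
  · -- cover each vertex exactly once
    intro v
    have huniq : ∀ e1 ∈ M i, ∀ e2 ∈ M i, v ∈ e1 → v ∈ e2 → e1 = e2 := by
      intro e1 he1 e2 he2 hv1 hv2
      rw [hM] at he1 he2
      rcases he1 with rfl | ⟨k, hk1, hk2, rfl⟩ <;> rcases he2 with rfl | ⟨k', hk'1, hk'2, rfl⟩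
      · rfl
      · exfalso
        simp only [Sym2.mem_iff] at hv1 hv2
        rcases hv1 with rfl | rfl <;> rcases hv2 with h | h <;>
          simp only [Option.some.injEq, reduceCtorEq] at h
        · exact rr_ne_zero n hn hk'1 hk'2 (by linear_combination -h)
        · exact rr_ne_zero n hn hk'1 hk'2 (by linear_combination h)
      · exfalso
        simp only [Sym2.mem_iff] at hv1 hv2
        rcases hv2 with rfl | rfl <;> rcases hv1 with h | h <;>
          simp only [Option.some.injEq, reduceCtorEq] at h
        · exact rr_ne_zero n hn hk1 hk2 (by linear_combination -h)
        · exact rr_ne_zero n hn hk1 hk2 (by linear_combination h)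
      · simp only [Sym2.mem_iff] at hv1 hv2
        have : v ≠ none := by
          rcases hv1 with rfl | rfl <;> simp
        obtain ⟨w, rfl⟩ := Option.ne_none_iff_exists'.mp this
        simp only [Option.some.injEq] at hv1 hv2
        have : k = k' := rr_shared n hn hk1 hk2 hk'1 hk'2 hv1 hv2
        subst this; rfl
    rcases v with _ | w
    · refine ⟨s(some i, none), ⟨by rw [hM]; exact Or.inl rfl, by simp⟩, ?_⟩
      intro e ⟨he, hve⟩
      exact huniq e he _ (by rw [hM]; exact Or.inl rfl) hve (by simp)
    · by_cases hw : w = i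
      · subst hw
        refine ⟨s(some w, none), ⟨by rw [hM]; exact Or.inl rfl, by simp⟩, ?_⟩
        intro e ⟨he, hve⟩
        exact huniq e he _ (by rw [hM]; exact Or.inl rfl) hve (by simp)
      · obtain ⟨k, hk1, hk2, hcast⟩ := rr_rep n hn (sub_ne_zero.mpr hw)
        refine ⟨s(some (i + (k : ZMod (2 * n - 1))), some (i - (k : ZMod (2 * n - 1)))),
          ⟨by rw [hM]; exact Or.inr ⟨k, hk1, hk2, rfl⟩, ?_⟩, ?_⟩
        · rcases hcast with h | h
          · have : w = i + (k : ZMod (2 * n - 1)) := by linear_combination -h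
            rw [this]; simp
          · have : w = i - (k : ZMod (2 * n - 1)) := by linear_combination h
            rw [this]; simp
        · intro e ⟨he, hve⟩
          refine huniq e he _ (by rw [hM]; exact Or.inr ⟨k, hk1, hk2, rfl⟩) hve ?_
          rcases hcast with h | h
          · have : w = i + (k : ZMod (2 * n - 1)) := by linear_combination -h
            rw [this]; simp
          · have : w = i - (k : ZMod (2 * n - 1)) := by linear_combination h
            rw [this]; simp
  · -- pairwise disjoint
    intro i j hij
    rw [Set.disjoint_left]
    intro e he1 he2
    apply hij
    rw [hM] at he1 he2
    rcases he1 with rfl | ⟨k, hk1, hk2, rfl⟩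
    · rcases he2 with h | ⟨k', hk'1, hk'2, h⟩
      · rw [Sym2.eq_iff] at h
        rcases h with ⟨h, -⟩ | ⟨-, h⟩ <;> simp_all
      · rw [Sym2.eq_iff] at h; simp at h
    · rcases he2 with h | ⟨k', hk'1, hk'2, h⟩
      · rw [Sym2.eq_iff] at h; simp at h
      · rw [Sym2.eq_iff] at h
        simp only [Option.some.injEq] at h
        rcases h with ⟨h1, h2⟩ | ⟨h1, h2⟩ <;>
          exact rr_two_cancel n hn (by linear_combination h1 + h2)
  · -- union is all non-diagonal edges
    ext e
    simp only [Set.mem_iUnion, Set.mem_setOf_eq]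
    constructor
    · rintro ⟨i, he⟩
      exact nondiag i e he
    · induction e using Sym2.inductionOn with
      | hf a b =>
        intro hd
        rw [Sym2.isDiag_iff_proj_eq] at hd
        rcases a with _ | x <;> rcases b with _ | y
        · exact absurd rfl hd
        · exact ⟨y, by rw [hM]; exact Or.inl (Sym2.eq_swap)⟩
        · exact ⟨x, by rw [hM]; exact Or.inl rfl⟩
        · have hxy : x ≠ y := fun h => hd (by rw [h])
          have h2 : IsUnit (2 : ZMod (2 * n - 1)) := by
            haveI : NeZero (2 * n - 1) := ⟨by omega⟩
            have := (ZMod.isUnit_iff_coprime 2 (2 * n - 1)).mpr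
              (Nat.coprime_two_left.mpr ⟨n - 1, by omega⟩)
            simpa using this
          obtain ⟨u, hu⟩ := h2
          obtain ⟨i, h2i⟩ : ∃ i : ZMod (2 * n - 1), i + i = x + y := by
            refine ⟨(u⁻¹ : (ZMod (2 * n - 1))ˣ) * (x + y), ?_⟩
            have huu : ((u : ZMod (2 * n - 1)) * (u⁻¹ : (ZMod (2 * n - 1))ˣ)) = 1 := by
              rw [← Units.val_mul, mul_inv_cancel, Units.val_one]
            calc (u⁻¹ : (ZMod (2 * n - 1))ˣ) * (x + y) + (u⁻¹ : (ZMod (2 * n - 1))ˣ) * (x + y)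
                = ((u : ZMod (2 * n - 1)) * (u⁻¹ : (ZMod (2 * n - 1))ˣ)) * (x + y) := by
                  rw [hu]; ring
              _ = x + y := by rw [huu, one_mul]
          have hc : x - i ≠ 0 := by
            intro h
            have hxi : x = i := by linear_combination h
            apply hxy
            have : y = i := by linear_combination -h2i - hxi
            rw [hxi, this]
          obtain ⟨k, hk1, hk2, hcast⟩ := rr_rep n hn hc
          refine ⟨i, ?_⟩
          rw [hM]
          refine Or.inr ⟨k, hk1, hk2, ?_⟩
          rcases hcast with h | h
          · have hx : some x = some (i + (k : ZMod (2 * n - 1))) := by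
              congr 1; linear_combination -h
            have hy : some y = some (i - (k : ZMod (2 * n - 1))) := by
              congr 1; linear_combination h - h2i
            rw [hx, hy]
          · have hx : some x = some (i - (k : ZMod (2 * n - 1))) := by
              congr 1; linear_combination h
            have hy : some y = some (i + (k : ZMod (2 * n - 1))) := by
              congr 1; linear_combination -h2i - h
            rw [hx, hy, Sym2.eq_swap]
end

section
/- Correctness of parallel (odd-even transposition) bubble sort in n rounds: let α be a linearly ordered type and let a₀ be a list (or tuple) of n elements of α. Define one 'even phase' as simultaneously replacing each pair of entries at positions (2k, 2k+1) (0-based, with 2k+1 < n) by that pair sorted nondecreasingly, and one 'odd phase' as doing the same for each pair of positions (2k+1, 2k+2) with 2k+2 < n. Then after applying n phases, alternating even and odd (starting with either), the resulting list is a permutation of a₀ that is sorted in nondecreasing order. -/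
variable {α : Type*} [LinearOrder α]

/-- One even phase of odd-even transposition sort: simultaneously replace each
pair of entries at positions `(2k, 2k+1)` by that pair sorted nondecreasingly. -/
def evenPhase : List α → List α
  | a :: b :: rest => min a b :: max a b :: evenPhase rest
  | l => l

/-- One odd phase of odd-even transposition sort: simultaneously replace each
pair of entries at positions `(2k+1, 2k+2)` by that pair sorted nondecreasingly. -/
def oddPhase : List α → List α
  | a :: rest => a :: evenPhase rest
  | l => l

/-- Apply `k` phases, alternating even and odd, starting with an even phase if
`b = true` and with an odd phase if `b = false`. -/
def applyPhases : ℕ → Bool → List α → List α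
  | 0, _, l => l
  | k + 1, b, l => applyPhases k (!b) ((if b then evenPhase else oddPhase) l)

/-!
Both phases commute with monotone maps, so thresholding at every `y` (via `x ↦ decide (y < x)`)
reduces the claim to lists of booleans. There, follow the zeros: in each phase a zero moves one
step left exactly when the comparator just below it is present and the cell to its left holds a
one. If the `j`-th zero starts at `Q j < n`, then after `t` phases it sits at some `p` with
`p ≤ j` or `p + t + [its comparator is absent from the next phase] ≤ Q j + j + 1`: a free zero
gains one step per phase, an idle one turns active in the next phase, and a blocked one inherits
the bound from the zero just to its left. At `t = n` this forces `p ≤ j` for every `j`, so the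
zeros fill an initial segment.
-/

theorem evenPhase_perm : ∀ l : List α, (evenPhase l).Perm l
  | [] | [_] => .refl _
  | a :: b :: rest => by
    refine (((evenPhase_perm rest).cons _).cons _).trans ?_
    rcases le_total a b with h | h
    · rw [min_eq_left h, max_eq_right h]
    · rw [min_eq_right h, max_eq_left h]
      exact .swap _ _ _

theorem oddPhase_perm : ∀ l : List α, (oddPhase l).Perm l
  | [] => .refl _
  | a :: rest => (evenPhase_perm rest).cons a

theorem applyPhases_perm : ∀ (k : ℕ) (b : Bool) (l : List α), (applyPhases k b l).Perm l
  | 0, _, _ => .refl _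
  | k + 1, b, l => (applyPhases_perm k (!b) _).trans <| by
    cases b
    · exact oddPhase_perm l
    · exact evenPhase_perm l

section Monotone

variable {β : Type*} [LinearOrder β] {f : α → β}

theorem evenPhase_map (hf : Monotone f) : ∀ l : List α,
    evenPhase (l.map f) = (evenPhase l).map f
  | [] | [_] => rfl
  | a :: b :: rest => by
    simp only [List.map_cons, evenPhase, evenPhase_map hf rest, hf.map_min, hf.map_max]

theorem oddPhase_map (hf : Monotone f) : ∀ l : List α,
    oddPhase (l.map f) = (oddPhase l).map f
  | [] => rfl
  | a :: rest => by simp only [List.map_cons, oddPhase, evenPhase_map hf rest]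

theorem applyPhases_map (hf : Monotone f) : ∀ (k : ℕ) (b : Bool) (l : List α),
    applyPhases k b (l.map f) = (applyPhases k b l).map f
  | 0, _, _ => rfl
  | k + 1, b, l => by
    cases b
    · exact (congrArg _ (oddPhase_map hf l)).trans (applyPhases_map hf k _ _)
    · exact (congrArg _ (evenPhase_map hf l)).trans (applyPhases_map hf k _ _)

end Monotone

theorem List.pairwise_le_of_forall_map_decide_lt {l : List α}
    (h : ∀ y, (l.map fun x => decide (y < x)).Pairwise (· ≤ ·)) : l.Pairwise (· ≤ ·) := by
  refine List.pairwise_iff_forall_sublist.mpr fun {a b} hab => not_lt.mp fun hba => ?_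
  have := List.pairwise_iff_forall_sublist.mp (List.pairwise_map.mp (h b)) hab
  exact absurd this (by simp [hba])

/-- `phase r` sorts the pairs of positions `(i, i + 1)` with `i ≡ r [MOD 2]`. -/
def phase (r : ℕ) : List α → List α := if r % 2 = 0 then evenPhase else oddPhase

theorem applyPhases_succ (t : ℕ) (b : Bool) (l : List α) :
    applyPhases (t + 1) b l = phase (t + if b then 0 else 1) (applyPhases t b l) := by
  induction t generalizing b l with
  | zero => cases b <;> rfl
  | succ t ih =>
    rw [applyPhases, ih, applyPhases]
    cases b
    · simp [phase, show (t + 1 + 1) % 2 = t % 2 by omega]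
    · simp [phase]

def zeroPositions : List Bool → List ℕ
  | [] => []
  | a :: s => (if a then [] else [0]) ++ (zeroPositions s).map (· + 1)

/-- The zero at position `q` moves to `q - 1` in `phase r` exactly when the pair `(q - 1, q)` is
sorted in that phase and holds a one at `q - 1`. -/
def stepZeros (r : ℕ) (Q : List ℕ) : List ℕ :=
  Q.map fun q => if 0 < q ∧ (q + r) % 2 = 1 ∧ q - 1 ∉ Q then q - 1 else q

theorem stepZeros_append_map_add {r k : ℕ} {A Z : List ℕ} (hA : ∀ a ∈ A, a < k)
    (hk : (k + r) % 2 = 0) :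
    stepZeros r (A ++ Z.map (· + k)) = stepZeros r A ++ (stepZeros (r + k) Z).map (· + k) := by
  simp only [stepZeros, List.map_append, List.map_map]
  congr 1
  · refine List.map_congr_left fun a ha => ?_
    have := hA a ha
    simp only [List.mem_append, List.mem_map]
    grind
  · refine List.map_congr_left fun q hq => ?_
    simp only [Function.comp_apply, List.mem_append, List.mem_map]
    grind

theorem stepZeros_add_two (r : ℕ) (Q : List ℕ) : stepZeros (r + 2) Q = stepZeros r Q := by
  simp only [stepZeros, ← Nat.add_assoc, Nat.add_mod_right]

theorem zeroPositions_cons_cons (x y : Bool) (s : List Bool) : zeroPositions (x :: y :: s) =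
    ((if x then [] else [0]) ++ (if y then [] else [1])) ++ (zeroPositions s).map (· + 2) := by
  cases x <;> cases y <;> simp [zeroPositions, List.map_map]

theorem zeroPositions_evenPhase {r : ℕ} (hr : r % 2 = 0) : ∀ s : List Bool,
    zeroPositions (evenPhase s) = stepZeros r (zeroPositions s)
  | [] => rfl
  | [a] => by cases a <;> simp [zeroPositions, stepZeros, evenPhase, hr]
  | a :: b :: rest => by
    rw [evenPhase, zeroPositions_cons_cons, zeroPositions_cons_cons,
      zeroPositions_evenPhase hr rest, stepZeros_append_map_add (by grind) (by omega),
      stepZeros_add_two]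
    congr 1
    cases a <;> cases b <;> simp [stepZeros, Nat.add_mod, hr]

theorem zeroPositions_oddPhase {r : ℕ} (hr : r % 2 = 1) : ∀ s : List Bool,
    zeroPositions (oddPhase s) = stepZeros r (zeroPositions s)
  | [] => rfl
  | a :: rest => by
    rw [oddPhase, zeroPositions, zeroPositions, zeroPositions_evenPhase (r := r + 1) (by omega),
      stepZeros_append_map_add (by grind) (by omega)]
    congr 1
    cases a <;> simp [stepZeros]

theorem zeroPositions_phase (r : ℕ) (s : List Bool) :
    zeroPositions (phase r s) = stepZeros r (zeroPositions s) := by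
  unfold phase
  split_ifs with hr
  · exact zeroPositions_evenPhase hr s
  · exact zeroPositions_oddPhase (by omega) s

theorem length_zeroPositions_applyPhases (t : ℕ) (b : Bool) (s : List Bool) :
    (zeroPositions (applyPhases t b s)).length = (zeroPositions s).length := by
  induction t with
  | zero => rfl
  | succ t ih => rw [applyPhases_succ, zeroPositions_phase, stepZeros, List.length_map, ih]

theorem lt_length_of_mem_zeroPositions : ∀ {s : List Bool} {q : ℕ}, q ∈ zeroPositions s →
    q < s.length
  | a :: s, q, hq => by
    rw [zeroPositions, List.mem_append, List.mem_map] at hq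
    rcases hq with hq | ⟨p, hp, rfl⟩
    · split at hq <;> simp_all
    · simpa using lt_length_of_mem_zeroPositions hp

theorem pairwise_lt_zeroPositions : ∀ s : List Bool, (zeroPositions s).Pairwise (· < ·)
  | [] => .nil
  | a :: s => by
    rw [zeroPositions, List.pairwise_append, List.pairwise_map]
    refine ⟨by split <;> simp, (pairwise_lt_zeroPositions s).imp (by omega), ?_⟩
    split <;> simp

theorem List.getElem_add_sub_le_getElem {Q : List ℕ} (hQ : Q.Pairwise (· < ·)) {i j : ℕ}
    (hij : i ≤ j) (hj : j < Q.length) : Q[i] + (j - i) ≤ Q[j] := by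
  induction j, hij using Nat.le_induction with
  | base => simp
  | succ j hij ih =>
    have := List.pairwise_iff_getElem.mp hQ j (j + 1) (by omega) hj (by omega)
    have := ih (by omega)
    omega

/-- For `p = (Z t)[j] > 0`, the term `(p + t + c + 1) % 2` is `1` exactly when the comparator
below `p` is absent from `phase (t + c)`. -/
theorem stepZeros_trajectory_bound {Z : ℕ → List ℕ} {c : ℕ}
    (hstep : ∀ t, Z (t + 1) = stepZeros (t + c) (Z t)) (hZ : ∀ t, (Z t).Pairwise (· < ·))
    (t j : ℕ) (hj₀ : j < (Z 0).length) (hj : j < (Z t).length) :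
    (Z t)[j] ≤ j ∨ (Z t)[j] + t + ((Z t)[j] + t + c + 1) % 2 ≤ (Z 0)[j] + j + 1 := by
  induction t generalizing j with
  | zero => omega
  | succ t ih =>
    have hj' : j < (Z t).length := by simpa [hstep, stepZeros] using hj
    have hget : (Z (t + 1))[j] =
        if 0 < (Z t)[j] ∧ ((Z t)[j] + (t + c)) % 2 = 1 ∧ (Z t)[j] - 1 ∉ Z t
        then (Z t)[j] - 1 else (Z t)[j] := by
      simp only [hstep, stepZeros, List.getElem_map]
    rw [hget]
    rcases ih j hj₀ hj' with hle | hbd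
    · left; split <;> omega
    split_ifs with hmove
    · omega
    by_cases hactive : 0 < (Z t)[j] ∧ ((Z t)[j] + (t + c)) % 2 = 1
    · have hblocked : (Z t)[j] - 1 ∈ Z t := not_not.mp fun h => hmove ⟨hactive.1, hactive.2, h⟩
      obtain ⟨i, hi, hiq⟩ := List.getElem_of_mem hblocked
      have hij : i < j := by
        by_contra! hji
        have := List.getElem_add_sub_le_getElem (hZ t) hji hi
        omega
      have hgap := List.getElem_add_sub_le_getElem (hZ 0) hij.le hj₀
      have hprev := ih i (by omega) hi
      omega
    · omega

theorem zeroPositions_eq_nil_iff : ∀ {s : List Bool}, zeroPositions s = [] ↔ ∀ x ∈ s, x = true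
  | [] => by simp [zeroPositions]
  | a :: s => by cases a <;> simp [zeroPositions, zeroPositions_eq_nil_iff]

theorem pairwise_le_of_getElem_zeroPositions_le : ∀ {s : List Bool},
    (∀ j (hj : j < (zeroPositions s).length), (zeroPositions s)[j] ≤ j) → s.Pairwise (· ≤ ·)
  | [], _ => .nil
  | false :: s, h => List.pairwise_cons.mpr ⟨fun _ _ => Bool.false_le _,
      pairwise_le_of_getElem_zeroPositions_le fun j hj => by
        simpa [zeroPositions] using h (j + 1) (by simpa [zeroPositions] using hj)⟩
  | true :: s, h => by
    have hnil : zeroPositions s = [] := by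
      refine List.eq_nil_of_length_eq_zero (Nat.eq_zero_of_not_pos fun hpos => ?_)
      simpa [zeroPositions] using h 0 (by simpa [zeroPositions] using hpos)
    refine List.pairwise_cons.mpr ⟨fun x hx => ?_, pairwise_le_of_getElem_zeroPositions_le ?_⟩
    · rw [zeroPositions_eq_nil_iff.mp hnil x hx]
    · simp [hnil]

theorem pairwise_le_applyPhases_length (b : Bool) (s : List Bool) :
    (applyPhases s.length b s).Pairwise (· ≤ ·) := by
  set Z := fun t => zeroPositions (applyPhases t b s)
  have hstep (t : ℕ) : Z (t + 1) = stepZeros (t + if b then 0 else 1) (Z t) := by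
    simp only [Z, applyPhases_succ, zeroPositions_phase]
  refine pairwise_le_of_getElem_zeroPositions_le fun j hj => ?_
  change (Z s.length)[j] ≤ j
  have hj₀ : j < (Z 0).length := by simpa [Z, length_zeroPositions_applyPhases] using hj
  have hlt : (Z 0)[j] < s.length := lt_length_of_mem_zeroPositions (List.getElem_mem hj₀)
  have := stepZeros_trajectory_bound hstep (fun t => pairwise_lt_zeroPositions _) s.length j hj₀ hj
  omega

/-- Correctness of parallel (odd-even transposition) bubble sort in `n` rounds:
for any list of length `n`, after `n` alternating phases (starting with either
parity) the result is a permutation of the input sorted in nondecreasing order. -/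
theorem odd_even_transposition_sort_correct (b : Bool) (l : List α) :
    (applyPhases l.length b l).Perm l ∧
      (applyPhases l.length b l).Pairwise (· ≤ ·) := by
  refine ⟨applyPhases_perm _ _ _, List.pairwise_le_of_forall_map_decide_lt fun y => ?_⟩
  have hmono : Monotone fun x => decide (y < x) := fun _ _ huv =>
    Bool.le_iff_imp.mpr fun h => decide_eq_true ((of_decide_eq_true h).trans_le huv)
  simpa [← applyPhases_map hmono] using pairwise_le_applyPhases_length b (l.map _)
end

section
/- Congruence of squares from smooth relation pairs: let N ≥ 2 and let q₁, …, qₙ be primes each coprime to N. Suppose for j = 1, …, m we are given positive integers u_j and nonnegative integers v_j together with natural-number exponents e_{i,j} (1 ≤ i ≤ n) and e'_{i,j} (0 ≤ i ≤ n) such that u_j = ∏_{i=1}^n q_i^{e_{i,j}} and u_j − v_j N = (−1)^{e'_{0,j}} ∏_{i=1}^n q_i^{e'_{i,j}}. Suppose t₁, …, t_m ∈ {0, 1} satisfy: Σ_{j=1}^m t_j e'_{0,j} is even, and for every 1 ≤ i ≤ n the integer Σ_{j=1}^m t_j (e'_{i,j} − e_{i,j}) is even. Define k_i = (1/2) Σ_{j=1}^m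 t_j (e'_{i,j} − e_{i,j}) ∈ ℤ and let X = ∏_{i=1}^n (q_i mod N)^{k_i}, a well-defined element of the unit group (ℤ/Nℤ)ˣ. Then X² = 1 in ℤ/Nℤ. -/
/-- Congruence of squares from smooth relation pairs: given primes `q i` coprime
to `N`, smooth relation pairs `(u j, v j)` with `u j = ∏ q i ^ e i j` and
`u j − v j · N = (−1)^(e0 j) · ∏ q i ^ e' i j`, and a 0/1 combination `t` making
`∑ t j * e0 j` and every `∑ t j * (e' i j − e i j)` even, the unit
`X = ∏ (q i mod N) ^ k i` with `k i = (1/2) ∑ t j * (e' i j − e i j)` satisfies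
`X² = 1` in `ℤ/Nℤ`. -/
theorem congruence_of_squares_from_smooth_relations
    (N : ℕ) (hN : 2 ≤ N) (n m : ℕ)
    (q : Fin n → ℕ) (hq : ∀ i, (q i).Prime) (hcop : ∀ i, (q i).Coprime N)
    (u v : Fin m → ℕ) (hu : ∀ j, 0 < u j)
    (e : Fin n → Fin m → ℕ) (e0 : Fin m → ℕ) (e' : Fin n → Fin m → ℕ)
    (hfac : ∀ j, u j = ∏ i, q i ^ e i j)
    (hfac' : ∀ j, (u j : ℤ) - (v j : ℤ) * (N : ℤ) =
      (-1) ^ e0 j * ∏ i, (q i : ℤ) ^ e' i j)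
    (t : Fin m → ℕ) (ht : ∀ j, t j ≤ 1)
    (hsign : Even (∑ j, t j * e0 j))
    (heven : ∀ i, Even (∑ j, (t j : ℤ) * ((e' i j : ℤ) - (e i j : ℤ))))
    (k : Fin n → ℤ)
    (hk : ∀ i, 2 * k i = ∑ j, (t j : ℤ) * ((e' i j : ℤ) - (e i j : ℤ))) :
    ((∏ i, (ZMod.unitOfCoprime (q i) (hcop i)) ^ k i : (ZMod N)ˣ) : ZMod N) ^ 2
      = 1 := by
  set U : Fin n → (ZMod N)ˣ := fun i => ZMod.unitOfCoprime (q i) (hcop i) with hU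
  set A : Fin n → ℕ := fun i => ∑ j, t j * e' i j with hA
  set B : Fin n → ℕ := fun i => ∑ j, t j * e i j with hB
  have h1 : ∏ j, (u j : ZMod N) ^ t j = ∏ i, (q i : ZMod N) ^ B i := by
    calc ∏ j, (u j : ZMod N) ^ t j
        = ∏ j, ∏ i, ((q i : ZMod N) ^ (e i j * t j)) := by
          refine Finset.prod_congr rfl fun j _ => ?_
          rw [hfac j]
          push_cast
          rw [← Finset.prod_pow]
          exact Finset.prod_congr rfl fun i _ => by rw [pow_mul]
      _ = ∏ i, ∏ j, ((q i : ZMod N) ^ (e i j * t j)) := Finset.prod_comm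
      _ = ∏ i, (q i : ZMod N) ^ B i := by
          refine Finset.prod_congr rfl fun i _ => ?_
          rw [Finset.prod_pow_eq_pow_sum, hB]
          congr 1
          exact Finset.sum_congr rfl fun j _ => mul_comm _ _
  have h2 : ∏ j, (u j : ZMod N) ^ t j = ∏ i, (q i : ZMod N) ^ A i := by
    have hcast : ∀ j, (u j : ZMod N) = (-1) ^ e0 j * ∏ i, (q i : ZMod N) ^ e' i j := by
      intro j
      have := congrArg (fun z : ℤ => (z : ZMod N)) (hfac' j)
      push_cast at this
      rw [ZMod.natCast_self] at this
      simpa using this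
    calc ∏ j, (u j : ZMod N) ^ t j
        = ∏ j, ((-1 : ZMod N) ^ (e0 j * t j) * ∏ i, (q i : ZMod N) ^ (e' i j * t j)) := by
          refine Finset.prod_congr rfl fun j _ => ?_
          rw [hcast j, mul_pow, ← pow_mul, ← Finset.prod_pow]
          congr 1
          exact Finset.prod_congr rfl fun i _ => by rw [pow_mul]
      _ = ((-1 : ZMod N) ^ (∑ j, e0 j * t j)) * ∏ j, ∏ i, (q i : ZMod N) ^ (e' i j * t j) := by
          rw [Finset.prod_mul_distrib, Finset.prod_pow_eq_pow_sum]
      _ = ∏ i, (q i : ZMod N) ^ A i := by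
          have hsign' : Even (∑ j, e0 j * t j) := by
            have : ∑ j, e0 j * t j = ∑ j, t j * e0 j :=
              Finset.sum_congr rfl fun j _ => mul_comm _ _
            rw [this]; exact hsign
          rw [hsign'.neg_one_pow, one_mul, Finset.prod_comm]
          refine Finset.prod_congr rfl fun i _ => ?_
          rw [Finset.prod_pow_eq_pow_sum, hA]
          congr 1
          exact Finset.sum_congr rfl fun j _ => mul_comm _ _
  have key : ∏ i, (q i : ZMod N) ^ A i = ∏ i, (q i : ZMod N) ^ B i := by
    rw [← h2, ← h1]
  have hUcoe : ∀ i, (U i : ZMod N) = (q i : ZMod N) := fun i => ZMod.coe_unitOfCoprime _ _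
  have huAB : ∏ i, U i ^ A i = ∏ i, U i ^ B i := by
    apply Units.ext
    push_cast
    simpa only [hUcoe] using key
  have hX2 : (∏ i, U i ^ k i) ^ 2 = 1 := by
    have hstep : ∀ i, (U i ^ k i) ^ (2 : ℕ) = U i ^ (A i : ℤ) * (U i ^ (B i : ℤ))⁻¹ := by
      intro i
      rw [← zpow_natCast (U i ^ k i) 2, ← zpow_mul, mul_comm]
      push_cast
      rw [hk i]
      have hAB : ∑ j, (t j : ℤ) * ((e' i j : ℤ) - (e i j : ℤ)) = (A i : ℤ) - (B i : ℤ) := by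
        rw [hA, hB]
        push_cast
        rw [← Finset.sum_sub_distrib]
        exact Finset.sum_congr rfl fun j _ => by ring
      rw [hAB, zpow_sub]
    calc (∏ i, U i ^ k i) ^ 2
        = ∏ i, (U i ^ k i) ^ (2:ℕ) := by rw [Finset.prod_pow]
      _ = ∏ i, (U i ^ (A i : ℤ) * (U i ^ (B i : ℤ))⁻¹) :=
          Finset.prod_congr rfl fun i _ => hstep i
      _ = (∏ i, U i ^ (A i : ℤ)) * (∏ i, U i ^ (B i : ℤ))⁻¹ := by
          rw [Finset.prod_mul_distrib, ← Finset.prod_inv_distrib]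
      _ = 1 := by
          simp only [zpow_natCast]
          rw [huAB, mul_inv_cancel]
  calc ((∏ i, U i ^ k i : (ZMod N)ˣ) : ZMod N) ^ 2
      = (((∏ i, U i ^ k i) ^ 2 : (ZMod N)ˣ) : ZMod N) := by push_cast; ring
    _ = 1 := by rw [hX2, Units.val_one]
end
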